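/- arXiv:2101.04181 — 4 statements merged into one kernel-verified Lean document; each statement's English description precedes it below -/
import Mathlib

section
/- Strang's lemma (abstract form). Let W be a real normed vector space, a : W → W → ℝ a bilinear form, and α, M > 0 constants such that α‖w‖² ≤ a(w,w) for all w ∈ W (coercivity) and |a(v,w)| ≤ M‖v‖‖w‖ for all v, w ∈ W (boundedness). Let V_h ⊆ W be a linear subspace, f : W → ℝ a linear functional, u ∈ W, and u_h ∈ V_h a discrete solution satisfying a(u_h, v) = f(v) for all v ∈ V_h. Suppose D ≥ 0 is a consistency bound, i.e. |f(v) − a(u,v)| ≤ D‖v‖ for all v ∈ V_h. Then for every w ∈ V_h one has ‖u − u_h‖ ≤ (1 + M/α)‖u − w‖ + D/α. -/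
/-!
Put `e = u_h - w ∈ V_h`. Galerkin orthogonality turns `a(e, v)` into the consistency error
`f(v) - a(u, v)` plus `a(u - w, v)`, so testing with `v = e` and using coercivity gives
`α‖e‖ ≤ M‖u - w‖ + D`; the triangle inequality `‖u - u_h‖ ≤ ‖u - w‖ + ‖e‖` finishes.
-/

lemma le_div_of_mul_sq_le_mul {α C x : ℝ} (hα : 0 < α) (hC : 0 ≤ C) (hx : 0 ≤ x)
    (h : α * x ^ 2 ≤ C * x) : x ≤ C / α := by
  rw [le_div_iff₀ hα]
  rcases hx.eq_or_lt with rfl | hx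
  · simpa using hC
  · exact le_of_mul_le_mul_right (by nlinarith) hx

section

variable {W : Type*} [NormedAddCommGroup W] [NormedSpace ℝ W] (a : W →ₗ[ℝ] W →ₗ[ℝ] ℝ)
  (f : W →ₗ[ℝ] ℝ)

lemma apply_sub_eq_consistency_add {u uh w v : W} (hgal : a uh v = f v) :
    a (uh - w) v = (f v - a u v) + a (u - w) v := by
  simp only [map_sub, LinearMap.sub_apply, hgal]
  ring

lemma apply_self_sub_le {M D : ℝ} (hbound : ∀ v w : W, |a v w| ≤ M * ‖v‖ * ‖w‖)
    {Vh : Submodule ℝ W} {u uh w : W} (huh : uh ∈ Vh) (hw : w ∈ Vh)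
    (hgal : ∀ v ∈ Vh, a uh v = f v) (hcons : ∀ v ∈ Vh, |f v - a u v| ≤ D * ‖v‖) :
    a (uh - w) (uh - w) ≤ (M * ‖u - w‖ + D) * ‖uh - w‖ := by
  have he : uh - w ∈ Vh := Vh.sub_mem huh hw
  calc a (uh - w) (uh - w) = (f (uh - w) - a u (uh - w)) + a (u - w) (uh - w) :=
        apply_sub_eq_consistency_add a f (hgal _ he)
    _ ≤ D * ‖uh - w‖ + M * ‖u - w‖ * ‖uh - w‖ :=
        add_le_add ((le_abs_self _).trans (hcons _ he)) ((le_abs_self _).trans (hbound _ _))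
    _ = (M * ‖u - w‖ + D) * ‖uh - w‖ := by ring

end

/-- Strang's lemma (abstract form). -/
theorem strang_lemma
    {W : Type*} [NormedAddCommGroup W] [NormedSpace ℝ W]
    (a : W →ₗ[ℝ] W →ₗ[ℝ] ℝ) (α M : ℝ) (hα : 0 < α) (hM : 0 < M)
    (hcoer : ∀ w : W, α * ‖w‖ ^ 2 ≤ a w w)
    (hbound : ∀ v w : W, |a v w| ≤ M * ‖v‖ * ‖w‖)
    (Vh : Submodule ℝ W) (f : W →ₗ[ℝ] ℝ)
    (u : W) (uh : W) (huh : uh ∈ Vh)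
    (hgal : ∀ v ∈ Vh, a uh v = f v)
    (D : ℝ) (hD : 0 ≤ D)
    (hcons : ∀ v ∈ Vh, |f v - a u v| ≤ D * ‖v‖) :
    ∀ w ∈ Vh, ‖u - uh‖ ≤ (1 + M / α) * ‖u - w‖ + D / α := by
  intro w hw
  have hdiscrete : ‖uh - w‖ ≤ (M * ‖u - w‖ + D) / α :=
    le_div_of_mul_sq_le_mul hα (by positivity) (norm_nonneg _)
      ((hcoer _).trans (apply_self_sub_le a f hbound huh hw hgal hcons))
  calc ‖u - uh‖ ≤ ‖u - w‖ + ‖uh - w‖ := by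
        simpa only [norm_sub_rev w uh] using norm_sub_le_norm_sub_add_norm_sub u w uh
    _ ≤ ‖u - w‖ + (M * ‖u - w‖ + D) / α := by gcongr
    _ = (1 + M / α) * ‖u - w‖ + D / α := by field_simp; ring
end

section
/- Piecewise Lipschitz functions on a convex domain are Lipschitz. Let Ω ⊆ ℝ^d be a convex set, and suppose Ω = K₁ ∪ ⋯ ∪ Kₙ where each Kᵢ is a closed convex subset of ℝ^d. Let u : ℝ^d → ℝ^m be continuous on Ω and suppose there is L ≥ 0 such that u is Lipschitz with constant L on each Kᵢ ∩ Ω. Then u is Lipschitz with constant L on all of Ω. -/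
/-! Near a point `p ∈ Ω`, every piece that contains a nearby point also contains `p`, since the
finitely many pieces missing `p` are closed; hence `u` satisfies the Lipschitz bound between `p`
and every point of `Ω` close to `p`. Along the segment from `x` to `y`, which lies in `Ω`, the set
of times up to which the bound holds from `x` is closed by continuity and, by the local bound,
open to the right; a continuous induction makes it the whole segment. -/

open Set Filter Topology

theorem norm_sub_le_of_forall_eventually_norm_sub_le {F : Type*} [SeminormedAddCommGroup F]
    {g : ℝ → F} {a b C : ℝ} (hab : a ≤ b) (hg : ContinuousOn g (Icc a b))
    (hloc : ∀ t ∈ Ico a b, ∀ᶠ t' in 𝓝[>] t, ‖g t' - g t‖ ≤ C * (t' - t)) :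
    ‖g b - g a‖ ≤ C * (b - a) := by
  set s := {t | ‖g t - g a‖ ≤ C * (t - a)}
  have hs_closed : IsClosed (s ∩ Icc a b) := by
    rw [inter_comm]
    exact isClosed_Icc.isClosed_le ((hg.sub continuousOn_const).norm)
      (continuousOn_const.mul (continuousOn_id.sub continuousOn_const))
  have ha : a ∈ s := by simp [s]
  have hstep : ∀ t ∈ s ∩ Ico a b, s ∈ 𝓝[>] t := by
    rintro t ⟨hts, ht⟩
    filter_upwards [hloc t ht] with t' ht'
    calc ‖g t' - g a‖ ≤ ‖g t' - g t‖ + ‖g t - g a‖ := norm_sub_le_norm_sub_add_norm_sub _ _ _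
      _ ≤ C * (t' - t) + C * (t - a) := add_le_add ht' hts
      _ = C * (t' - a) := by ring
  exact hs_closed.Icc_subset_of_forall_mem_nhdsWithin ha hstep (right_mem_Icc.2 hab)

theorem eventually_nhds_mem_imp_mem_of_isClosed {ι X : Type*} [Finite ι] [TopologicalSpace X]
    {K : ι → Set X} (hK : ∀ i, IsClosed (K i)) (p : X) :
    ∀ᶠ q in 𝓝 p, ∀ i, q ∈ K i → p ∈ K i := by
  refine eventually_all.2 fun i => ?_
  by_cases hp : p ∈ K i
  · exact Eventually.of_forall fun _ _ => hp
  · filter_upwards [(hK i).isOpen_compl.mem_nhds hp] with q hq hqK using absurd hqK hq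

section
variable {E F : Type*} [SeminormedAddCommGroup E] [NormedSpace ℝ E] [SeminormedAddCommGroup F]

theorem Convex.norm_sub_le_of_forall_eventually_norm_sub_le {S : Set E} (hS : Convex ℝ S)
    {f : E → F} (hf : ContinuousOn f S) {L : ℝ}
    (hloc : ∀ p ∈ S, ∀ᶠ q in 𝓝[S] p, ‖f q - f p‖ ≤ L * ‖q - p‖)
    {x y : E} (hx : x ∈ S) (hy : y ∈ S) : ‖f y - f x‖ ≤ L * ‖y - x‖ := by
  set γ := AffineMap.lineMap (k := ℝ) x y
  have hγS : MapsTo γ (Icc 0 1) S := fun t ht => hS.lineMap_mem hx hy ht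
  have hγ : Continuous γ := AffineMap.lineMap_continuous
  have hdist : ∀ t t', ‖γ t' - γ t‖ = |t' - t| * ‖y - x‖ := fun t t' => by
    rw [← dist_eq_norm, dist_lineMap_lineMap, Real.dist_eq, dist_comm, dist_eq_norm]
  have key := _root_.norm_sub_le_of_forall_eventually_norm_sub_le (g := f ∘ γ) (C := L * ‖y - x‖)
    zero_le_one (hf.comp hγ.continuousOn hγS) fun t ⟨ht0, ht1⟩ => by
      have hγ_tendsto : Tendsto γ (𝓝[>] t) (𝓝[S] (γ t)) := by
        rw [← nhdsWithin_Ioc_eq_nhdsGT ht1]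
        exact hγ.continuousWithinAt.tendsto_nhdsWithin
          (hγS.mono_left fun s hs => ⟨ht0.trans hs.1.le, hs.2⟩)
      filter_upwards [hγ_tendsto.eventually (hloc _ (hγS ⟨ht0, ht1.le⟩)), self_mem_nhdsWithin]
        with t' ht' htt'
      rw [hdist, abs_of_pos (sub_pos.2 htt')] at ht'
      calc ‖f (γ t') - f (γ t)‖ ≤ L * ((t' - t) * ‖y - x‖) := ht'
        _ = L * ‖y - x‖ * (t' - t) := by ring
  simpa only [Function.comp_apply, γ, AffineMap.lineMap_apply_zero, AffineMap.lineMap_apply_one,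
    sub_zero, mul_one] using key
end

theorem eventually_norm_sub_le_of_piecewise {ι X F : Type*} [Finite ι] [SeminormedAddCommGroup X]
    [SeminormedAddCommGroup F] {S : Set X} {K : ι → Set X} (hK : ∀ i, IsClosed (K i))
    (hS : S ⊆ ⋃ i, K i) {f : X → F} {L : ℝ}
    (hlip : ∀ i, ∀ x ∈ K i ∩ S, ∀ y ∈ K i ∩ S, ‖f x - f y‖ ≤ L * ‖x - y‖)
    {p : X} (hp : p ∈ S) : ∀ᶠ q in 𝓝[S] p, ‖f q - f p‖ ≤ L * ‖q - p‖ := by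
  filter_upwards [nhdsWithin_le_nhds (eventually_nhds_mem_imp_mem_of_isClosed hK p),
    self_mem_nhdsWithin] with q hqK hqS
  obtain ⟨i, hqi⟩ := mem_iUnion.1 (hS hqS)
  exact hlip i q ⟨hqi, hqS⟩ p ⟨hqK i hqi, hp⟩

theorem piecewise_lipschitz_on_convex_general
    (d m : ℕ) (Ω : Set (EuclideanSpace ℝ (Fin d))) (hΩ : Convex ℝ Ω)
    (n : ℕ) (K : Fin n → Set (EuclideanSpace ℝ (Fin d)))
    (hKclosed : ∀ i, IsClosed (K i))
    (hunion : Ω = ⋃ i, K i)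
    (u : EuclideanSpace ℝ (Fin d) → EuclideanSpace ℝ (Fin m))
    (hu : ContinuousOn u Ω)
    (L : ℝ)
    (hlip : ∀ i, ∀ x ∈ K i ∩ Ω, ∀ y ∈ K i ∩ Ω, ‖u x - u y‖ ≤ L * ‖x - y‖) :
    ∀ x ∈ Ω, ∀ y ∈ Ω, ‖u x - u y‖ ≤ L * ‖x - y‖ :=
  fun _ hx _ hy => hΩ.norm_sub_le_of_forall_eventually_norm_sub_le hu
    (fun _ => eventually_norm_sub_le_of_piecewise hKclosed hunion.subset hlip) hy hx

/-- Piecewise Lipschitz functions on a convex domain are Lipschitz: if a convex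
set `Ω ⊆ ℝ^d` is a finite union of closed convex sets, and `u` is continuous on
`Ω` and `L`-Lipschitz on each piece, then `u` is `L`-Lipschitz on `Ω`. -/
theorem piecewise_lipschitz_on_convex
    (d m : ℕ) (Ω : Set (EuclideanSpace ℝ (Fin d))) (hΩ : Convex ℝ Ω)
    (n : ℕ) (K : Fin n → Set (EuclideanSpace ℝ (Fin d)))
    (hKclosed : ∀ i, IsClosed (K i)) (hKconvex : ∀ i, Convex ℝ (K i))
    (hunion : Ω = ⋃ i, K i)
    (u : EuclideanSpace ℝ (Fin d) → EuclideanSpace ℝ (Fin m))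
    (hu : ContinuousOn u Ω)
    (L : ℝ) (hL : 0 ≤ L)
    (hlip : ∀ i, ∀ x ∈ K i ∩ Ω, ∀ y ∈ K i ∩ Ω, ‖u x - u y‖ ≤ L * ‖x - y‖) :
    ∀ x ∈ Ω, ∀ y ∈ Ω, ‖u x - u y‖ ≤ L * ‖x - y‖ :=
  piecewise_lipschitz_on_convex_general d m Ω hΩ n K hKclosed hunion u hu L hlip
end

section
/- Trace inequality on an edge of a triangle. Let A, B, C ∈ ℝ² be affinely independent points and K = convexHull{A, B, C} the corresponding closed nondegenerate triangle. Then there exists a constant c_K > 0, depending only on K, such that for every function f : ℝ² → ℝ that is continuously differentiable on a neighbourhood of K, ∫₀¹ f(A + t(B − A))² dt ≤ c_K ( ∫_K f(x)² dx + ∫_K ‖∇f(x)‖² dx ), where dx denotes two-dimensional Lebesgue measure on K and ∇f the gradient of f. -/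
/-!
Along the segment from an edge point `P t = A + t (B - A)` towards the vertex `C`, the fundamental
theorem of calculus applied to `(1 - 2s) φ(s)²`, `φ(s) = f (P t + s (C - P t))`, gives
`f(P t)² ≤ ∫₀^{1/2} (3 f² + diam(K)² ‖∇f‖²)`. Integrating over `t ∈ [0, 1]`, these segments sweep
out part of `K` through the Duffy map `(t, s) ↦ P t + s (C - P t)`, whose Jacobian
`(1 - s) det(B - A, C - A)` is at least half the determinant for `s ≤ 1/2`; the change of variables
formula then bounds the double integral by `2 / |det(B - A, C - A)| ∫_K (3 f² + diam(K)² ‖∇f‖²)`.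
-/

open MeasureTheory Set AffineMap

theorem sq_le_intervalIntegral_of_hasDerivAt {φ φ' : ℝ → ℝ} {a : ℝ} (ha : 0 < a)
    (hφ : ∀ s ∈ Icc 0 a, HasDerivAt φ (φ' s) s) (hφ' : ContinuousOn φ' (Icc 0 a)) :
    φ 0 ^ 2 ≤ ∫ s in 0..a, ((a⁻¹ + 1) * φ s ^ 2 + φ' s ^ 2) := by
  have hφc : ContinuousOn φ (Icc 0 a) := fun s hs => (hφ s hs).continuousAt.continuousWithinAt
  rw [← uIcc_of_le ha.le] at hφ hφ' hφc
  -- `(1 - s / a) * φ s ^ 2` runs from `φ 0 ^ 2` at `s = 0` down to `0` at `s = a`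
  set ψ' : ℝ → ℝ := fun s => -(a⁻¹ * φ s ^ 2) + (1 - s / a) * (2 * φ s * φ' s)
  have hψ : ∀ s ∈ uIcc 0 a, HasDerivAt (fun s => (1 - s / a) * φ s ^ 2) (ψ' s) s := by
    intro s hs
    refine ((((hasDerivAt_id' s).div_const a).const_sub 1).mul ((hφ s hs).pow 2)).congr_deriv ?_
    simp only [ψ', Pi.pow_apply]
    ring
  have hψ'c : ContinuousOn ψ' (uIcc 0 a) := by fun_prop
  have hφ0 : φ 0 ^ 2 = ∫ s in 0..a, -ψ' s := by
    rw [intervalIntegral.integral_neg,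
      intervalIntegral.integral_eq_sub_of_hasDerivAt hψ hψ'c.intervalIntegrable]
    simp [ha.ne']
  rw [hφ0]
  refine intervalIntegral.integral_mono_on ha.le hψ'c.neg.intervalIntegrable
    (by fun_prop : ContinuousOn _ (uIcc 0 a)).intervalIntegrable fun s hs => ?_
  have hw0 : 0 ≤ 1 - s / a := sub_nonneg.mpr ((div_le_one ha).mpr hs.2)
  have hw1 : 1 - s / a ≤ 1 := sub_le_self 1 (div_nonneg hs.1 ha.le)
  have hamgm : -(2 * φ s * φ' s) ≤ φ s ^ 2 + φ' s ^ 2 := by nlinarith [sq_nonneg (φ s + φ' s)]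
  simp only [ψ']
  nlinarith [sq_nonneg (φ s), sq_nonneg (φ' s)]

theorem AffineIndependent.linearIndependent_pair_sub {V : Type*} [AddCommGroup V] [Module ℝ V]
    {A B C : V} (h : AffineIndependent ℝ ![A, B, C]) : LinearIndependent ℝ ![B - A, C - A] := by
  rw [LinearIndependent.pair_iff]
  intro a b hab
  have := h.eq_zero_of_sum_eq_zero (s := Finset.univ) (w := ![-(a + b), a, b])
    (by simp [Fin.sum_univ_three]) (by
      simp only [Fin.sum_univ_three, Matrix.cons_val_zero, Matrix.cons_val_one, Matrix.cons_val]
      rw [← hab]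
      module)
  exact ⟨this 1 (Finset.mem_univ _), this 2 (Finset.mem_univ _)⟩

theorem intervalIntegral_intervalIntegral_eq_setIntegral_prod {F : ℝ × ℝ → ℝ} {a b c d : ℝ}
    (hab : a ≤ b) (hcd : c ≤ d) (hF : IntegrableOn F (Ioc a b ×ˢ Ioc c d)) :
    ∫ t in a..b, ∫ s in c..d, F (t, s) = ∫ z in Ioc a b ×ˢ Ioc c d, F z := by
  rw [Measure.volume_eq_prod] at hF ⊢
  simp only [intervalIntegral.integral_of_le hab, intervalIntegral.integral_of_le hcd]
  exact (setIntegral_prod F hF).symm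

theorem IntegrableOn.intervalIntegrable_intervalIntegral {F : ℝ × ℝ → ℝ} {a b c d : ℝ}
    (hab : a ≤ b) (hcd : c ≤ d) (hF : IntegrableOn F (Ioc a b ×ˢ Ioc c d)) :
    IntervalIntegrable (fun t => ∫ s in c..d, F (t, s)) volume a b := by
  rw [IntegrableOn, Measure.volume_eq_prod, ← Measure.prod_restrict] at hF
  rw [intervalIntegrable_iff_integrableOn_Ioc_of_le hab]
  simpa only [intervalIntegral.integral_of_le hcd, IntegrableOn] using hF.integral_prod_left

section NormedSpace

variable {E : Type*} [NormedAddCommGroup E] [NormedSpace ℝ E]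

theorem sq_le_intervalIntegral_lineMap {f : E → ℝ} {U : Set E} (hU : IsOpen U)
    (hf : ContDiffOn ℝ 1 f U) {x y : E} {a M : ℝ} (ha : 0 < a) (hM : ‖y - x‖ ≤ M)
    (hxy : ∀ s ∈ Icc 0 a, lineMap x y s ∈ U) :
    f x ^ 2 ≤ ∫ s in 0..a,
      ((a⁻¹ + 1) * f (lineMap x y s) ^ 2 + M ^ 2 * ‖fderiv ℝ f (lineMap x y s)‖ ^ 2) := by
  have hderiv : ∀ s ∈ Icc 0 a, HasDerivAt (fun s => f (lineMap x y s))
      (fderiv ℝ f (lineMap x y s) (y - x)) s := fun s hs =>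
    ((hf.contDiffAt (hU.mem_nhds (hxy s hs))).differentiableAt one_ne_zero).hasFDerivAt
      |>.comp_hasDerivAt s hasDerivAt_lineMap
  have hDf : ContinuousOn (fun s => fderiv ℝ f (lineMap x y s)) (Icc 0 a) :=
    (hf.continuousOn_fderiv_of_isOpen hU le_rfl).comp (by fun_prop) hxy
  have hf' : ContinuousOn (fun s => f (lineMap x y s)) (Icc 0 a) :=
    hf.continuousOn.comp (by fun_prop) hxy
  calc f x ^ 2 = f (lineMap x y 0) ^ 2 := by rw [lineMap_apply_zero]
    _ ≤ ∫ s in 0..a,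
        ((a⁻¹ + 1) * f (lineMap x y s) ^ 2 + fderiv ℝ f (lineMap x y s) (y - x) ^ 2) :=
      sq_le_intervalIntegral_of_hasDerivAt ha hderiv (hDf.clm_apply continuousOn_const)
    _ ≤ _ := by
      rw [← uIcc_of_le ha.le] at hDf hf'
      refine intervalIntegral.integral_mono_on ha.le ?_ ?_ fun s _ => ?_
      · exact ((continuousOn_const.mul (hf'.pow 2)).add
          ((hDf.clm_apply continuousOn_const).pow 2)).intervalIntegrable
      · exact ((continuousOn_const.mul (hf'.pow 2)).add
          (continuousOn_const.mul (hDf.norm.pow 2))).intervalIntegrable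
      gcongr
      calc fderiv ℝ f (lineMap x y s) (y - x) ^ 2
          ≤ (‖fderiv ℝ f (lineMap x y s)‖ * ‖y - x‖) ^ 2 := by
            rw [← sq_abs, ← Real.norm_eq_abs]
            gcongr
            exact (fderiv ℝ f (lineMap x y s)).le_opNorm (y - x)
        _ ≤ (‖fderiv ℝ f (lineMap x y s)‖ * M) ^ 2 := by gcongr
        _ = M ^ 2 * ‖fderiv ℝ f (lineMap x y s)‖ ^ 2 := by ring

theorem lineMap_lineMap_mem_convexHull (A B C : E) {t s : ℝ} (ht : t ∈ Icc 0 1)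
    (hs : s ∈ Icc 0 1) : lineMap (lineMap A B t) C s ∈ convexHull ℝ {A, B, C} :=
  (convex_convexHull ℝ _).lineMap_mem
    ((convex_convexHull ℝ _).lineMap_mem (subset_convexHull ℝ _ (by simp))
      (subset_convexHull ℝ _ (by simp)) ht) (subset_convexHull ℝ _ (by simp)) hs

theorem sq_le_intervalIntegral_lineMap_lineMap {A B C : E} {f : E → ℝ} {U : Set E}
    (hU : IsOpen U) (hKU : convexHull ℝ {A, B, C} ⊆ U) (hf : ContDiffOn ℝ 1 f U) {t : ℝ}
    (ht : t ∈ Icc 0 1) :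
    f (lineMap A B t) ^ 2 ≤ ∫ s in 0..1/2, (3 * f (lineMap (lineMap A B t) C s) ^ 2 +
      Metric.diam (convexHull ℝ {A, B, C}) ^ 2 *
        ‖fderiv ℝ f (lineMap (lineMap A B t) C s)‖ ^ 2) := by
  have hmem : ∀ s ∈ Icc (0 : ℝ) 1, lineMap (lineMap A B t) C s ∈ convexHull ℝ {A, B, C} :=
    fun s hs => lineMap_lineMap_mem_convexHull A B C ht hs
  have hdiam : ‖C - lineMap A B t‖ ≤ Metric.diam (convexHull ℝ {A, B, C}) := by
    simpa [dist_eq_norm] using Metric.dist_le_diam_of_mem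
      ((toFinite _).isCompact_convexHull ℝ).isBounded (hmem 1 (by simp)) (hmem 0 (by simp))
  have := sq_le_intervalIntegral_lineMap hU hf (by norm_num : (0 : ℝ) < 1 / 2) hdiam
    fun s hs => hKU (hmem s ⟨hs.1, hs.2.trans (by norm_num)⟩)
  rwa [show ((1 : ℝ) / 2)⁻¹ + 1 = 3 by norm_num] at this

theorem integrableOn_lineMap_lineMap {A B C : E} {g : E → ℝ}
    (hg : ContinuousOn g (convexHull ℝ {A, B, C})) {I J : Set ℝ} (hI : I ⊆ Icc 0 1)
    (hJ : J ⊆ Icc 0 1) :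
    IntegrableOn (fun z : ℝ × ℝ => g (lineMap (lineMap A B z.1) C z.2)) (I ×ˢ J) :=
  ((hg.comp (by fun_prop) fun z hz => lineMap_lineMap_mem_convexHull A B C hz.1 hz.2)
    |>.integrableOn_compact (isCompact_Icc.prod isCompact_Icc)).mono_set (prod_mono hI hJ)

end NormedSpace

theorem norm_gradient {E : Type*} [NormedAddCommGroup E] [InnerProductSpace ℝ E] [CompleteSpace E]
    (f : E → ℝ) (x : E) : ‖gradient f x‖ = ‖fderiv ℝ f x‖ :=
  (InnerProductSpace.toDual ℝ E).symm.norm_map _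

local notation "ℝ²" => EuclideanSpace ℝ (Fin 2)

noncomputable section

def planeCoords : ℝ² ≃L[ℝ] ℝ × ℝ :=
  (EuclideanSpace.equiv (Fin 2) ℝ).trans (ContinuousLinearEquiv.finTwoArrow ℝ ℝ)


theorem measurePreserving_planeCoords : MeasurePreserving planeCoords :=
  (volume_preserving_finTwoArrow ℝ).comp (PiLp.volume_preserving_ofLp (Fin 2))

theorem measurableEmbedding_planeCoords : MeasurableEmbedding planeCoords :=
  planeCoords.toHomeomorph.measurableEmbedding

variable (A B C : ℝ²)

def duffy (p : ℝ²) : ℝ² := lineMap (lineMap A B (p 0)) C (p 1)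

theorem duffy_eq (p : ℝ²) :
    duffy A B C p = A + (p 0 * (1 - p 1)) • (B - A) + p 1 • (C - A) := by
  simp only [duffy, lineMap_apply_module']
  module

def duffyDeriv (p : ℝ²) : ℝ² →L[ℝ] ℝ² :=
  ContinuousLinearMap.smulRight
      ((1 - p 1) • EuclideanSpace.proj (𝕜 := ℝ) (0 : Fin 2) - p 0 • EuclideanSpace.proj (1 : Fin 2))
      (B - A)
    + (EuclideanSpace.proj (𝕜 := ℝ) (1 : Fin 2)).smulRight (C - A)

theorem hasFDerivAt_duffy (p : ℝ²) : HasFDerivAt (duffy A B C) (duffyDeriv A B C p) p := by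
  have h0 := (EuclideanSpace.proj (𝕜 := ℝ) (0 : Fin 2)).hasFDerivAt (x := p)
  have h1 := (EuclideanSpace.proj (𝕜 := ℝ) (1 : Fin 2)).hasFDerivAt (x := p)
  have hcoeff : HasFDerivAt (fun q : ℝ² => q 0 * (1 - q 1))
      ((1 - p 1) • EuclideanSpace.proj (𝕜 := ℝ) (0 : Fin 2) - p 0 • EuclideanSpace.proj (1 : Fin 2))
      p :=
    (h0.mul (h1.const_sub 1)).congr_fderiv <| by
      ext
      simp only [PiLp.proj_apply, add_apply, neg_apply, smul_apply, smul_eq_mul, sub_apply]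
      ring
  rw [funext (duffy_eq A B C)]
  exact ((hcoeff.smul_const (B - A)).const_add A).add (h1.smul_const (C - A))

def doubleSignedArea : ℝ :=
  (EuclideanSpace.basisFun (Fin 2) ℝ).toBasis.det ![B - A, C - A]

theorem det_duffyDeriv (p : ℝ²) :
    (duffyDeriv A B C p).det = (1 - p 1) * doubleSignedArea A B C := by
  rw [ContinuousLinearMap.det,
    ← LinearMap.det_toMatrix (EuclideanSpace.basisFun (Fin 2) ℝ).toBasis, doubleSignedArea,
    Module.Basis.det_apply, Matrix.det_fin_two, Matrix.det_fin_two]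
  simp [LinearMap.toMatrix_apply, Module.Basis.toMatrix_apply, duffyDeriv]
  ring

variable {A B C}

theorem doubleSignedArea_ne_zero (h : LinearIndependent ℝ ![B - A, C - A]) :
    doubleSignedArea A B C ≠ 0 :=
  ((EuclideanSpace.basisFun (Fin 2) ℝ).toBasis.is_basis_iff_det.mp
    ⟨h, h.span_eq_top_of_card_eq_finrank (by simp)⟩).ne_zero

theorem injOn_duffy (h : LinearIndependent ℝ ![B - A, C - A]) :
    InjOn (duffy A B C) {p | p 1 ≠ 1} := by
  intro p hp q hq hpq
  have hcomb : (p 0 * (1 - p 1) - q 0 * (1 - q 1)) • (B - A) + (p 1 - q 1) • (C - A) = 0 := by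
    rw [duffy_eq, duffy_eq, ← sub_eq_zero] at hpq
    rw [← hpq]
    module
  obtain ⟨h0, h1⟩ := LinearIndependent.pair_iff.mp h _ _ hcomb
  have h1' : p 1 = q 1 := sub_eq_zero.mp h1
  rw [h1', ← sub_mul] at h0
  have h0' : p 0 = q 0 :=
    sub_eq_zero.mp ((mul_eq_zero.mp h0).resolve_right (sub_ne_zero.mpr (Ne.symm hq)))
  ext i
  fin_cases i
  exacts [h0', h1']

theorem intervalIntegral_intervalIntegral_lineMap_le (h : LinearIndependent ℝ ![B - A, C - A])
    {g : ℝ² → ℝ} (hg0 : ∀ x, 0 ≤ g x) (hg : ContinuousOn g (convexHull ℝ {A, B, C})) :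
    ∫ t in 0..1, ∫ s in 0..1/2, g (lineMap (lineMap A B t) C s) ≤
      2 / |doubleSignedArea A B C| * ∫ x in convexHull ℝ {A, B, C}, g x := by
  set K := convexHull ℝ {A, B, C}
  set S := planeCoords ⁻¹' (Ioc (0 : ℝ) 1 ×ˢ Ioc 0 (1 / 2))
  have hS : MeasurableSet S :=
    (measurableSet_Ioc.prod measurableSet_Ioc).preimage planeCoords.continuous.measurable
  have hbox : IntegrableOn (fun z : ℝ × ℝ => g (lineMap (lineMap A B z.1) C z.2))
      (Ioc 0 1 ×ˢ Ioc 0 (1 / 2)) :=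
    integrableOn_lineMap_lineMap hg Ioc_subset_Icc_self
      (Ioc_subset_Icc_self.trans (Icc_subset_Icc_right (by norm_num)))
  have hSK : duffy A B C '' S ⊆ K := by
    rintro _ ⟨p, ⟨hp0, hp1⟩, rfl⟩
    exact lineMap_lineMap_mem_convexHull A B C (Ioc_subset_Icc_self hp0)
      ⟨hp1.1.le, hp1.2.trans (by norm_num)⟩
  have hinj : InjOn (duffy A B C) S := (injOn_duffy h).mono fun p hp => by
    have hp1 : p 1 ≤ 1 / 2 := hp.2.2
    exact (hp1.trans_lt (by norm_num)).ne
  have hderiv : ∀ p ∈ S, HasFDerivWithinAt (duffy A B C) (duffyDeriv A B C p) S p :=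
    fun p _ => (hasFDerivAt_duffy A B C p).hasFDerivWithinAt
  have hgK : IntegrableOn g K := hg.integrableOn_compact ((toFinite _).isCompact_convexHull ℝ)
  have hgS : IntegrableOn (fun p => g (duffy A B C p)) S :=
    (measurePreserving_planeCoords.integrableOn_comp_preimage measurableEmbedding_planeCoords).mpr
      hbox
  have hdetS : IntegrableOn (fun p => |(duffyDeriv A B C p).det| • g (duffy A B C p)) S :=
    (integrableOn_image_iff_integrableOn_abs_det_fderiv_smul volume hS hderiv hinj g).mp
      (hgK.mono_set hSK)
  have hD : 0 < |doubleSignedArea A B C| := abs_pos.mpr (doubleSignedArea_ne_zero h)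
  calc ∫ t in 0..1, ∫ s in 0..1/2, g (lineMap (lineMap A B t) C s)
      = ∫ p in S, g (duffy A B C p) := by
        rw [intervalIntegral_intervalIntegral_eq_setIntegral_prod zero_le_one (by norm_num) hbox,
          ← measurePreserving_planeCoords.setIntegral_preimage_emb measurableEmbedding_planeCoords]
        rfl
    _ ≤ ∫ p in S, 2 / |doubleSignedArea A B C| *
          (|(duffyDeriv A B C p).det| • g (duffy A B C p)) := by
        refine setIntegral_mono_on hgS (hdetS.const_mul _) hS fun p hp => ?_
        have hp1 : p 1 ≤ 1 / 2 := hp.2.2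
        rw [det_duffyDeriv, smul_eq_mul, abs_mul, abs_of_nonneg (a := 1 - p 1) (by linarith)]
        field_simp
        nlinarith [hg0 (duffy A B C p)]
    _ = 2 / |doubleSignedArea A B C| * ∫ x in duffy A B C '' S, g x := by
        rw [integral_const_mul,
          integral_image_eq_integral_abs_det_fderiv_smul volume hS hderiv hinj]
    _ ≤ 2 / |doubleSignedArea A B C| * ∫ x in K, g x :=
        mul_le_mul_of_nonneg_left (setIntegral_mono_set hgK (.of_forall hg0) hSK.eventuallyLE)
          (by positivity)

theorem intervalIntegral_sq_lineMap_le (h : LinearIndependent ℝ ![B - A, C - A]) {f : ℝ² → ℝ}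
    {U : Set ℝ²} (hU : IsOpen U) (hKU : convexHull ℝ {A, B, C} ⊆ U) (hf : ContDiffOn ℝ 1 f U) :
    ∫ t in 0..1, f (lineMap A B t) ^ 2 ≤ 2 / |doubleSignedArea A B C| *
      ∫ x in convexHull ℝ {A, B, C}, (3 * f x ^ 2 +
        Metric.diam (convexHull ℝ {A, B, C}) ^ 2 * ‖fderiv ℝ f x‖ ^ 2) := by
  have hg : ContinuousOn (fun x => 3 * f x ^ 2 +
      Metric.diam (convexHull ℝ {A, B, C}) ^ 2 * ‖fderiv ℝ f x‖ ^ 2) (convexHull ℝ {A, B, C}) :=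
    ((continuousOn_const.mul (hf.continuousOn.pow 2)).add
      (continuousOn_const.mul ((hf.continuousOn_fderiv_of_isOpen hU le_rfl).norm.pow 2))).mono hKU
  refine le_trans ?_ (intervalIntegral_intervalIntegral_lineMap_le h (fun x => by positivity) hg)
  refine intervalIntegral.integral_mono_on zero_le_one ?_
    (IntegrableOn.intervalIntegrable_intervalIntegral zero_le_one (by norm_num)
      (integrableOn_lineMap_lineMap hg Ioc_subset_Icc_self
        (Ioc_subset_Icc_self.trans (Icc_subset_Icc_right (by norm_num)))))
    fun t ht => sq_le_intervalIntegral_lineMap_lineMap hU hKU hf ht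
  refine ContinuousOn.intervalIntegrable ?_
  rw [uIcc_of_le zero_le_one]
  exact (hf.continuousOn.comp (by fun_prop) fun t ht =>
    hKU ((convex_convexHull ℝ _).lineMap_mem (subset_convexHull ℝ _ (by simp))
      (subset_convexHull ℝ _ (by simp)) ht)).pow 2

end

/-- Trace inequality on an edge of a nondegenerate triangle in the plane. -/
theorem trace_inequality_triangle_edge
    (A B C : EuclideanSpace ℝ (Fin 2))
    (hABC : AffineIndependent ℝ ![A, B, C]) :
    ∃ cK : ℝ, 0 < cK ∧
      ∀ f : EuclideanSpace ℝ (Fin 2) → ℝ,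
        (∃ U : Set (EuclideanSpace ℝ (Fin 2)), IsOpen U ∧
          convexHull ℝ {A, B, C} ⊆ U ∧ ContDiffOn ℝ 1 f U) →
        ∫ t in (0:ℝ)..1, (f (A + t • (B - A))) ^ 2 ≤
          cK * ((∫ x in convexHull ℝ {A, B, C}, (f x) ^ 2) +
            ∫ x in convexHull ℝ {A, B, C}, ‖gradient f x‖ ^ 2) := by
  have hLI := hABC.linearIndependent_pair_sub
  set K := convexHull ℝ {A, B, C}
  have hK : IsCompact K := (toFinite _).isCompact_convexHull ℝ
  set M := Metric.diam K
  have hD : 0 < |doubleSignedArea A B C| := abs_pos.mpr (doubleSignedArea_ne_zero hLI)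
  refine ⟨2 / |doubleSignedArea A B C| * (3 + M ^ 2), by positivity, ?_⟩
  rintro f ⟨U, hU, hKU, hf⟩
  have hf2 : IntegrableOn (fun x => f x ^ 2) K :=
    (hf.continuousOn.pow 2 |>.mono hKU).integrableOn_compact hK
  have hDf2 : IntegrableOn (fun x => ‖fderiv ℝ f x‖ ^ 2) K :=
    ((hf.continuousOn_fderiv_of_isOpen hU le_rfl).norm.pow 2 |>.mono hKU).integrableOn_compact hK
  have hX : 0 ≤ ∫ x in K, f x ^ 2 := setIntegral_nonneg hK.measurableSet fun x _ => by positivity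
  have hY : 0 ≤ ∫ x in K, ‖fderiv ℝ f x‖ ^ 2 :=
    setIntegral_nonneg hK.measurableSet fun x _ => by positivity
  simp only [norm_gradient]
  calc ∫ t in (0:ℝ)..1, f (A + t • (B - A)) ^ 2 = ∫ t in (0:ℝ)..1, f (lineMap A B t) ^ 2 := by
        simp only [lineMap_apply_module', add_comm]
    _ ≤ 2 / |doubleSignedArea A B C| * ∫ x in K, (3 * f x ^ 2 + M ^ 2 * ‖fderiv ℝ f x‖ ^ 2) :=
        intervalIntegral_sq_lineMap_le hLI hU hKU hf
    _ = 2 / |doubleSignedArea A B C| *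
          (3 * (∫ x in K, f x ^ 2) + M ^ 2 * ∫ x in K, ‖fderiv ℝ f x‖ ^ 2) := by
        rw [integral_add (hf2.const_mul 3) (hDf2.const_mul _), integral_const_mul,
          integral_const_mul]
    _ ≤ _ := by
        rw [mul_assoc]
        gcongr
        nlinarith [sq_nonneg M]
end

section
/- Poincaré–Wirtinger inequality on convex sets with diameter scaling. There exists a constant C > 0 such that for every compact convex set K ⊆ ℝ² with positive two-dimensional Lebesgue measure |K| and every function f : ℝ² → ℝ continuously differentiable on a neighbourhood of K, ∫_K ( f(x) − |K|⁻¹ ∫_K f(y) dy )² dx ≤ C (diam K)² ∫_K ‖∇f(x)‖² dx, where diam K is the diameter of K. -/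
/-!
Twice the measure of `K` times the left-hand side equals `∫_K ∫_K (f x - f y)²`. Along the
segment from `x` to `y`, the fundamental theorem of calculus and Jensen's inequality give
`(f x - f y)² ≤ (diam K)² ∫₀¹ ‖Df (x + t (y - x))‖² dt`. For fixed `t ≥ 1/2` the map
`y ↦ x + t (y - x)` is a homothety of ratio at least `1/2`, so its inverse Jacobian is at most
`2ⁿ`; for `t ≤ 1/2` the same holds for `x` with the roles of the endpoints exchanged. Hence the
triple integral is at most `2ⁿ |K| ∫_K ‖Df‖²`, and in the plane `C = 2² / 2 = 2` works.
-/

open MeasureTheory Set AffineMap Module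
open scoped ENNReal

section Variance

variable {α : Type*} [MeasurableSpace α] {μ : Measure α} [IsFiniteMeasure μ] {f : α → ℝ}

theorem integral_quadratic (hf : MemLp f 2 μ) (a b c : ℝ) :
    ∫ x, (a * f x ^ 2 + b * f x + c) ∂μ =
      a * ∫ x, f x ^ 2 ∂μ + b * ∫ x, f x ∂μ + μ.real univ * c := by
  have hf1 : Integrable (fun x => b * f x) μ := (hf.integrable one_le_two).const_mul b
  have hf2 : Integrable (fun x => a * f x ^ 2) μ := hf.integrable_sq.const_mul a
  have hf12 : Integrable (fun x => a * f x ^ 2 + b * f x) μ := hf2.add hf1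
  rw [integral_add hf12 (integrable_const c), integral_add hf2 hf1, integral_const_mul,
    integral_const_mul, integral_const, smul_eq_mul]

theorem two_mul_measureReal_mul_integral_sub_average_sq (hf : MemLp f 2 μ) :
    2 * μ.real univ * ∫ x, (f x - ⨍ y, f y ∂μ) ^ 2 ∂μ = ∫ x, ∫ y, (f x - f y) ^ 2 ∂μ ∂μ := by
  rcases eq_zero_or_neZero μ with rfl | hμ
  · simp
  have hm : μ.real univ ≠ 0 := measureReal_univ_pos.ne'
  have hinner : ∀ x, ∫ y, (f x - f y) ^ 2 ∂μ =
      μ.real univ * f x ^ 2 + (-2 * ∫ y, f y ∂μ) * f x + ∫ y, f y ^ 2 ∂μ := fun x => by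
    calc ∫ y, (f x - f y) ^ 2 ∂μ = ∫ y, (1 * f y ^ 2 + (-2 * f x) * f y + f x ^ 2) ∂μ :=
          integral_congr_ae (ae_of_all _ fun y => by ring)
      _ = _ := by rw [integral_quadratic hf]; ring
  have houter : ∫ x, (f x - ⨍ y, f y ∂μ) ^ 2 ∂μ =
      ∫ x, (1 * f x ^ 2 + (-2 * ⨍ y, f y ∂μ) * f x + (⨍ y, f y ∂μ) ^ 2) ∂μ :=
    integral_congr_ae (ae_of_all _ fun x => by ring)
  rw [integral_congr_ae (ae_of_all _ hinner), integral_quadratic hf, houter, integral_quadratic hf,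
    average_eq, smul_eq_mul]
  field_simp
  ring

end Variance

theorem enorm_sub_sq_le_lintegral_fderiv_lineMap {E : Type*} [NormedAddCommGroup E]
    [NormedSpace ℝ E] {f : E → ℝ} {U : Set E} (hU : IsOpen U) (hf : ContDiffOn ℝ 1 f U)
    {x y : E} (hxy : segment ℝ x y ⊆ U) :
    ‖f x - f y‖ₑ ^ 2 ≤ ‖x - y‖ₑ ^ 2 * ∫⁻ t in Icc (0 : ℝ) 1, ‖fderiv ℝ f (lineMap x y t)‖ₑ ^ 2 := by
  have hmem : MapsTo (lineMap x y) (Icc (0 : ℝ) 1) U :=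
    fun t ht => hxy (lineMap_mem_segment ℝ x y ht)
  set φ : ℝ → ℝ := fun t => fderiv ℝ f (lineMap x y t) (y - x)
  have hφc : ContinuousOn φ (Icc 0 1) :=
    ((hf.continuousOn_fderiv_of_isOpen hU le_rfl).comp lineMap_continuous.continuousOn
      hmem).clm_apply continuousOn_const
  have hderiv : ∀ t ∈ uIcc (0 : ℝ) 1, HasDerivAt (f ∘ lineMap x y) (φ t) t := by
    intro t ht
    rw [uIcc_of_le zero_le_one] at ht
    have hfd := (hf.differentiableOn one_ne_zero _ (hmem ht)).differentiableAt
      (hU.mem_nhds (hmem ht))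
    exact hfd.hasFDerivAt.comp_hasDerivAt t hasDerivAt_lineMap
  have hftc : f y - f x = ∫ t in Icc (0 : ℝ) 1, φ t := by
    rw [integral_Icc_eq_integral_Ioc, ← intervalIntegral.integral_of_le zero_le_one,
      intervalIntegral.integral_eq_sub_of_hasDerivAt hderiv
        (hφc.intervalIntegrable_of_Icc zero_le_one)]
    simp
  have : IsProbabilityMeasure (volume.restrict (Icc (0 : ℝ) 1)) := ⟨by simp⟩
  have hsq : ∀ r : ℝ, ‖r‖ₑ ^ 2 = ENNReal.ofReal (r ^ 2) := fun r => by
    rw [← enorm_pow, Real.enorm_of_nonneg (sq_nonneg r)]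
  have hφ2i : IntegrableOn (fun t => φ t ^ 2) (Icc 0 1) := (hφc.pow 2).integrableOn_Icc
  have jensen : (∫ t in Icc (0 : ℝ) 1, φ t) ^ 2 ≤ ∫ t in Icc (0 : ℝ) 1, φ t ^ 2 :=
    (even_two.convexOn_pow).map_integral_le (continuous_pow 2).continuousOn isClosed_univ
      (by simp) hφc.integrableOn_Icc hφ2i
  calc ‖f x - f y‖ₑ ^ 2 = ENNReal.ofReal ((∫ t in Icc (0 : ℝ) 1, φ t) ^ 2) := by
        rw [enorm_sub_rev, hftc, hsq]
    _ ≤ ENNReal.ofReal (∫ t in Icc (0 : ℝ) 1, φ t ^ 2) := ENNReal.ofReal_le_ofReal jensen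
    _ = ∫⁻ t in Icc (0 : ℝ) 1, ‖φ t‖ₑ ^ 2 := by
        rw [ofReal_integral_eq_lintegral_ofReal hφ2i (ae_of_all _ fun t => sq_nonneg _)]
        simp only [hsq]
    _ ≤ ∫⁻ t in Icc (0 : ℝ) 1, ‖fderiv ℝ f (lineMap x y t)‖ₑ ^ 2 * ‖x - y‖ₑ ^ 2 := by
        refine lintegral_mono fun t => ?_
        rw [← mul_pow, enorm_sub_rev x]
        gcongr
        exact (fderiv ℝ f (lineMap x y t)).le_opENorm _
    _ = _ := by rw [lintegral_mul_const' _ _ (by simp), mul_comm]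

section Haar

variable {E : Type*} [NormedAddCommGroup E] [NormedSpace ℝ E] [MeasurableSpace E] [BorelSpace E]
  [FiniteDimensional ℝ E] (μ : Measure E) [μ.IsAddHaarMeasure]

theorem lintegral_comp_homothety (G : E → ℝ≥0∞) (a : E) {r : ℝ} (hr : r ≠ 0) :
    ∫⁻ x, G (homothety a r x) ∂μ = ENNReal.ofReal |(r ^ finrank ℝ E)⁻¹| * ∫⁻ x, G x ∂μ := by
  have hsmul : MeasurableEmbedding (r • · : E → E) :=
    (Homeomorph.smulOfNeZero r hr).measurableEmbedding
  calc ∫⁻ x, G (homothety a r x) ∂μ = ∫⁻ x, G (r • x + a) ∂μ := by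
        simpa [homothety_apply] using lintegral_sub_right_eq_self (fun x => G (r • x + a)) a
    _ = ∫⁻ x, G (x + a) ∂(Measure.map (r • ·) μ) := (hsmul.lintegral_map (G <| · + a)).symm
    _ = _ := by
        rw [Measure.map_addHaar_smul μ hr, lintegral_smul_measure, smul_eq_mul,
          lintegral_add_right_eq_self]

theorem lintegral_comp_lineMap_le {G : E → ℝ≥0∞} (a : E) {t : ℝ} (ht : 2⁻¹ ≤ t) :
    ∫⁻ x, G (lineMap a x t) ∂μ ≤ 2 ^ finrank ℝ E * ∫⁻ x, G x ∂μ := by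
  have ht0 : 0 < t := lt_of_lt_of_le (by norm_num) ht
  simp_rw [← homothety_eq_lineMap]
  rw [lintegral_comp_homothety μ G a ht0.ne']
  gcongr
  rw [abs_of_pos (by positivity), ← inv_pow, ENNReal.ofReal_pow (by positivity)]
  gcongr
  rw [← ENNReal.ofReal_ofNat 2]
  exact ENNReal.ofReal_le_ofReal ((inv_le_comm₀ ht0 two_pos).mpr ht)

theorem setLIntegral_setLIntegral_lineMap_le {G : E → ℝ≥0∞} (s : Set E) {t : ℝ} (ht : 2⁻¹ ≤ t) :
    ∫⁻ x in s, ∫⁻ y in s, G (lineMap x y t) ∂μ ∂μ ≤ 2 ^ finrank ℝ E * μ s * ∫⁻ x, G x ∂μ :=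
  calc ∫⁻ x in s, ∫⁻ y in s, G (lineMap x y t) ∂μ ∂μ
      ≤ ∫⁻ _ in s, 2 ^ finrank ℝ E * ∫⁻ x, G x ∂μ ∂μ :=
        lintegral_mono fun x => (setLIntegral_le_lintegral s _).trans
          (lintegral_comp_lineMap_le μ x ht)
    _ = 2 ^ finrank ℝ E * μ s * ∫⁻ x, G x ∂μ := by rw [setLIntegral_const]; ring

theorem setLIntegral_setLIntegral_lintegral_lineMap_le {G : E → ℝ≥0∞} (hG : Measurable G)
    (s : Set E) :
    ∫⁻ x in s, ∫⁻ y in s, (∫⁻ t in Icc (0 : ℝ) 1, G (lineMap x y t)) ∂μ ∂μ ≤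
      2 ^ finrank ℝ E * μ s * ∫⁻ x, G x ∂μ := by
  have hGl : Measurable fun p : (E × E) × ℝ => G (lineMap p.1.1 p.1.2 p.2) :=
    hG.comp (AffineMap.lineMap_continuous_uncurry.comp
      (by fun_prop : Continuous fun p : (E × E) × ℝ => (p.1.1, p.1.2, p.2))).measurable
  have hbound : ∀ t ∈ Icc (0 : ℝ) 1,
      ∫⁻ x in s, ∫⁻ y in s, G (lineMap x y t) ∂μ ∂μ ≤ 2 ^ finrank ℝ E * μ s * ∫⁻ x, G x ∂μ := by
    intro t ht
    rcases le_total 2⁻¹ t with ht' | ht'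
    · exact setLIntegral_setLIntegral_lineMap_le μ s ht'
    calc ∫⁻ x in s, ∫⁻ y in s, G (lineMap x y t) ∂μ ∂μ
        = ∫⁻ x in s, ∫⁻ y in s, G (lineMap y x (1 - t)) ∂μ ∂μ := by
          simp only [lineMap_apply_one_sub]
      _ = ∫⁻ y in s, ∫⁻ x in s, G (lineMap y x (1 - t)) ∂μ ∂μ :=
          lintegral_lintegral_swap (hGl.comp (measurable_snd.prodMk measurable_fst |>.prodMk
            measurable_const)).aemeasurable
      _ ≤ _ := setLIntegral_setLIntegral_lineMap_le μ s (by linarith)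
  calc ∫⁻ x in s, ∫⁻ y in s, (∫⁻ t in Icc (0 : ℝ) 1, G (lineMap x y t)) ∂μ ∂μ
      = ∫⁻ x in s, (∫⁻ t in Icc (0 : ℝ) 1, ∫⁻ y in s, G (lineMap x y t) ∂μ) ∂μ :=
        lintegral_congr fun x => lintegral_lintegral_swap (hGl.comp
          (measurable_const.prodMk measurable_fst |>.prodMk measurable_snd)).aemeasurable
    _ = ∫⁻ t in Icc (0 : ℝ) 1, ∫⁻ x in s, ∫⁻ y in s, G (lineMap x y t) ∂μ ∂μ := by
        refine lintegral_lintegral_swap (Measurable.aemeasurable ?_)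
        exact Measurable.lintegral_prod_right' (f := fun q : (E × ℝ) × E =>
            G (lineMap q.1.1 q.2 q.1.2)) (hGl.comp
            ((measurable_fst.fst.prodMk measurable_snd).prodMk measurable_fst.snd))
    _ ≤ ∫⁻ _ in Icc (0 : ℝ) 1, 2 ^ finrank ℝ E * μ s * ∫⁻ x, G x ∂μ :=
        setLIntegral_mono measurable_const hbound
    _ = 2 ^ finrank ℝ E * μ s * ∫⁻ x, G x ∂μ := by simp

theorem Convex.setLIntegral_setLIntegral_enorm_sub_sq_le {K U : Set E} (hK : IsCompact K)
    (hconv : Convex ℝ K) (hU : IsOpen U) (hKU : K ⊆ U) {f : E → ℝ} (hf : ContDiffOn ℝ 1 f U) :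
    ∫⁻ x in K, ∫⁻ y in K, ‖f x - f y‖ₑ ^ 2 ∂μ ∂μ ≤
      2 ^ finrank ℝ E * Metric.ediam K ^ 2 * μ K * ∫⁻ x in K, ‖fderiv ℝ f x‖ₑ ^ 2 ∂μ := by
  set G : E → ℝ≥0∞ := K.indicator fun q => ‖fderiv ℝ f q‖ₑ ^ 2
  have hG : Measurable G := ((measurable_fderiv ℝ f).enorm.pow_const 2).indicator hK.measurableSet
  have hseg : ∀ x ∈ K, ∀ y ∈ K, ‖f x - f y‖ₑ ^ 2 ≤
      Metric.ediam K ^ 2 * ∫⁻ t in Icc (0 : ℝ) 1, G (lineMap x y t) := by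
    intro x hx y hy
    have hxy : segment ℝ x y ⊆ K := hconv.segment_subset hx hy
    refine (enorm_sub_sq_le_lintegral_fderiv_lineMap hU hf (hxy.trans hKU)).trans ?_
    gcongr ?_ ^ 2 * ?_
    · rw [← edist_eq_enorm_sub]
      exact Metric.edist_le_ediam_of_mem hx hy
    · exact setLIntegral_mono' measurableSet_Icc fun t ht =>
        (indicator_of_mem (hxy (lineMap_mem_segment ℝ x y ht))
          fun q => ‖fderiv ℝ f q‖ₑ ^ 2).ge
  have hdiam : Metric.ediam K ^ 2 ≠ ⊤ := ENNReal.pow_ne_top hK.isBounded.ediam_ne_top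
  calc ∫⁻ x in K, ∫⁻ y in K, ‖f x - f y‖ₑ ^ 2 ∂μ ∂μ
      ≤ ∫⁻ x in K, ∫⁻ y in K, Metric.ediam K ^ 2 *
          (∫⁻ t in Icc (0 : ℝ) 1, G (lineMap x y t)) ∂μ ∂μ :=
        setLIntegral_mono' hK.measurableSet fun x hx =>
          setLIntegral_mono' hK.measurableSet fun y hy => hseg x hx y hy
    _ = Metric.ediam K ^ 2 *
          ∫⁻ x in K, ∫⁻ y in K, (∫⁻ t in Icc (0 : ℝ) 1, G (lineMap x y t)) ∂μ ∂μ := by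
        simp only [lintegral_const_mul' _ _ hdiam]
    _ ≤ Metric.ediam K ^ 2 * (2 ^ finrank ℝ E * μ K * ∫⁻ x, G x ∂μ) := by
        gcongr; exact setLIntegral_setLIntegral_lintegral_lineMap_le μ hG K
    _ = _ := by rw [lintegral_indicator hK.measurableSet]; ring

theorem Convex.setIntegral_setIntegral_sub_sq_le {K U : Set E} (hK : IsCompact K)
    (hconv : Convex ℝ K) (hU : IsOpen U) (hKU : K ⊆ U) {f : E → ℝ} (hf : ContDiffOn ℝ 1 f U) :
    ∫ x in K, ∫ y in K, (f x - f y) ^ 2 ∂μ ∂μ ≤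
      2 ^ finrank ℝ E * Metric.diam K ^ 2 * μ.real K * ∫ x in K, ‖fderiv ℝ f x‖ ^ 2 ∂μ := by
  have hDf : ∫⁻ x in K, ‖fderiv ℝ f x‖ₑ ^ 2 ∂μ =
      ENNReal.ofReal (∫ x in K, ‖fderiv ℝ f x‖ ^ 2 ∂μ) := by
    have hcont : ContinuousOn (fun x => ‖fderiv ℝ f x‖ ^ 2) K :=
      ((hf.continuousOn_fderiv_of_isOpen hU le_rfl).mono hKU).norm.pow 2
    rw [ofReal_integral_eq_lintegral_ofReal (hcont.integrableOn_compact hK)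
      (ae_of_all _ fun x => by positivity)]
    simp only [ENNReal.ofReal_pow (norm_nonneg _), ofReal_norm]
  have hlint : ‖∫ x in K, ∫ y in K, (f x - f y) ^ 2 ∂μ ∂μ‖ₑ ≤
      ∫⁻ x in K, ∫⁻ y in K, ‖f x - f y‖ₑ ^ 2 ∂μ ∂μ := by
    refine (enorm_integral_le_lintegral_enorm _).trans (lintegral_mono fun x => ?_)
    exact (enorm_integral_le_lintegral_enorm _).trans_eq (by simp only [enorm_pow])
  have hbound := hlint.trans (hconv.setLIntegral_setLIntegral_enorm_sub_sq_le μ hK hU hKU hf)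
  rw [hDf] at hbound
  have hfin : 2 ^ finrank ℝ E * Metric.ediam K ^ 2 * μ K *
      ENNReal.ofReal (∫ x in K, ‖fderiv ℝ f x‖ ^ 2 ∂μ) ≠ ⊤ := by
    simp [ENNReal.mul_eq_top, hK.measure_lt_top.ne, hK.isBounded.ediam_ne_top]
  calc ∫ x in K, ∫ y in K, (f x - f y) ^ 2 ∂μ ∂μ
      ≤ ‖∫ x in K, ∫ y in K, (f x - f y) ^ 2 ∂μ ∂μ‖ₑ.toReal := by
        rw [toReal_enorm]; exact Real.le_norm_self _
    _ ≤ _ := ENNReal.toReal_mono hfin hbound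
    _ = _ := by
        simp only [ENNReal.toReal_mul, ENNReal.toReal_pow, ENNReal.toReal_ofNat,
          ENNReal.toReal_ofReal (by positivity : 0 ≤ ∫ x in K, ‖fderiv ℝ f x‖ ^ 2 ∂μ)]
        rfl

end Haar

/-- Poincaré–Wirtinger inequality on compact convex planar sets, with
quadratic scaling in the diameter and a constant independent of the set. -/
theorem poincare_wirtinger_convex :
    ∃ C : ℝ, 0 < C ∧
      ∀ K : Set (EuclideanSpace ℝ (Fin 2)),
        IsCompact K → Convex ℝ K → 0 < volume K →
        ∀ f : EuclideanSpace ℝ (Fin 2) → ℝ,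
          (∃ U : Set (EuclideanSpace ℝ (Fin 2)), IsOpen U ∧ K ⊆ U ∧
            ContDiffOn ℝ 1 f U) →
          ∫ x in K, (f x - (volume K).toReal⁻¹ * ∫ y in K, f y) ^ 2 ≤
            C * (Metric.diam K) ^ 2 * ∫ x in K, ‖gradient f x‖ ^ 2 := by
  refine ⟨2, two_pos, ?_⟩
  rintro K hK hconv hvol f ⟨U, hU, hKU, hf⟩
  have : IsFiniteMeasure (volume.restrict K) := isFiniteMeasure_restrict.mpr hK.measure_lt_top.ne
  have hm : 0 < volume.real K := ENNReal.toReal_pos hvol.ne' hK.measure_lt_top.ne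
  have hfc : ContinuousOn f K := hf.continuousOn.mono hKU
  have hfL2 : MemLp f 2 (volume.restrict K) :=
    (memLp_two_iff_integrable_sq (hfc.aestronglyMeasurable hK.measurableSet)).mpr
      ((hfc.pow 2).integrableOn_compact hK)
  have hvar := two_mul_measureReal_mul_integral_sub_average_sq hfL2
  rw [measureReal_restrict_apply_univ, setAverage_eq, smul_eq_mul] at hvar
  have hdouble := hconv.setIntegral_setIntegral_sub_sq_le volume hK hU hKU hf
  rw [finrank_euclideanSpace_fin] at hdouble
  have hgrad : ∀ x, ‖gradient f x‖ = ‖fderiv ℝ f x‖ := fun x => by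
    rw [← toDual_gradient, LinearIsometryEquiv.norm_map]
  simp_rw [hgrad, ← measureReal_def]
  exact le_of_mul_le_mul_left (hvar.trans_le (hdouble.trans_eq (by ring))) (by positivity)
end
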